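/- For the Invincible Fighter (u = 1), for every integer s ≥ 1 the function t ↦ N(s,t) − N(s−1,t) is non-decreasing on [0,∞). -/

import Mathlib

open Real MeasureTheory Filter Topology

/-- Auxiliary history-based recursion: `Nhist a u n m t` equals `N(m,t)` when `m ≤ n`. -/
noncomputable def Nhist (a : ℕ → ℝ) (u : ℝ) : ℕ → ℕ → ℝ → ℝ
  | 0, _, _ => 0
  | n + 1, m, t =>
      if m ≤ n then Nhist a u n m t
      else (Finset.Icc 1 (n + 1)).sup'
          (Finset.nonempty_Icc.mpr (Nat.succ_le_succ (Nat.zero_le n)))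
          (fun j => a j + (a j * (1 - u) + u) *
            (Real.exp (-t) * ∫ x in (0:ℝ)..t, Nhist a u n (n + 1 - j) x * Real.exp x))

/-- `Nval a u n t` is `N(n,t)`, the optimal expected number of enemy planes shot down,
with `N(0,t) = 0` and `N(n,t) = max_{1 ≤ j ≤ n} N_n(j,t)`. -/
noncomputable def Nval (a : ℕ → ℝ) (u : ℝ) (n : ℕ) (t : ℝ) : ℝ :=
  Nhist a u n n t

/-- `Nstar a u r t` is `N*(r,t) = e^{-t} ∫_0^t N(r,x) e^x dx` (so `N*(0,t) = 0`). -/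
noncomputable def Nstar (a : ℕ → ℝ) (u : ℝ) (r : ℕ) (t : ℝ) : ℝ :=
  Real.exp (-t) * ∫ x in (0:ℝ)..t, Nval a u r x * Real.exp x

/-- `Nalloc a u n j t` is `N_n(j,t) = a(j) + c(j)·N*(n-j,t)` where `c(j) = a(j)(1-u)+u`. -/
noncomputable def Nalloc (a : ℕ → ℝ) (u : ℝ) (n j : ℕ) (t : ℝ) : ℝ :=
  a j + (a j * (1 - u) + u) * Nstar a u (n - j) t

/-- `Kopt a u n t = min { j ∈ {1,…,n} : N_n(j,t) = N(n,t) }`. -/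
noncomputable def Kopt (a : ℕ → ℝ) (u : ℝ) (n : ℕ) (t : ℝ) : ℕ :=
  sInf {j : ℕ | 1 ≤ j ∧ j ≤ n ∧ Nalloc a u n j t = Nval a u n t}

/-! Write `D_n = N(n+1,·) - N(n,·)` and, for fixed `t ≤ t'`, `Φ_r = N*(r,t') - N*(r,t)`.
Since `N*(r+1,·) - N*(r,·) = e^{-t} ∫_0^t D_r(x) e^x dx = ∫_0^t D_r(t-y) e^{-y} dy` and `D_r ≥ 0`,
this difference is nondecreasing whenever `D_r` is; so, by strong induction on `n`, `Φ_r` is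
nondecreasing in `r ≤ n`. Now let `K` be an optimal first allocation for `N(n+1,t)` and `K'` one
for `N(n,t')`. If `K ≤ K'+1`, playing `K` at `(n+1,t')` and `K'` at `(n,t)` gives
`D_n(t') - D_n(t) ≥ Φ_{n+1-K} - Φ_{n-K'} ≥ 0`. Otherwise playing `K'+1` at `(n+1,t')` and `K-1`
at `(n,t)` gives `D_n(t') ≥ a(K'+1) - a(K') ≥ a(K) - a(K-1) ≥ D_n(t)` by concavity. -/

open Set intervalIntegral

noncomputable def expSmooth (f : ℝ → ℝ) (t : ℝ) : ℝ :=
  exp (-t) * ∫ x in (0:ℝ)..t, f x * exp x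

section expSmooth

variable {f g : ℝ → ℝ}

theorem intervalIntegrable_mul_exp (hf : Continuous f) (a b : ℝ) :
    IntervalIntegrable (fun x => f x * exp x) volume a b :=
  (hf.mul continuous_exp).intervalIntegrable a b

theorem continuous_expSmooth (hf : Continuous f) : Continuous (expSmooth f) :=
  (continuous_exp.comp continuous_neg).mul
    (continuous_primitive (intervalIntegrable_mul_exp hf) 0)

theorem expSmooth_sub (hf : Continuous f) (hg : Continuous g) (t : ℝ) :
    expSmooth f t - expSmooth g t = expSmooth (fun x => f x - g x) t := by
  simp only [expSmooth, sub_mul]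
  rw [← mul_sub, ← integral_sub (intervalIntegrable_mul_exp hf 0 t)
    (intervalIntegrable_mul_exp hg 0 t)]

theorem expSmooth_le_expSmooth (hf : Continuous f) (hg : Continuous g) {t : ℝ} (ht : 0 ≤ t)
    (hfg : ∀ x ∈ Icc 0 t, f x ≤ g x) : expSmooth f t ≤ expSmooth g t :=
  mul_le_mul_of_nonneg_left
    (integral_mono_on ht (intervalIntegrable_mul_exp hf 0 t) (intervalIntegrable_mul_exp hg 0 t)
      fun x hx => mul_le_mul_of_nonneg_right (hfg x hx) (exp_pos x).le)
    (exp_pos _).le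

theorem expSmooth_eq_integral_comp_sub (t : ℝ) :
    expSmooth f t = ∫ y in (0:ℝ)..t, f (t - y) * exp (-y) := by
  have := integral_comp_sub_left (fun x => f x * exp (x - t)) (a := 0) (b := t) t
  simp only [sub_sub_cancel_left, sub_self, sub_zero] at this
  rw [this, expSmooth, ← intervalIntegral.integral_const_mul]
  refine integral_congr fun x _ => ?_
  simp only [sub_eq_add_neg, exp_add]
  ring

theorem monotoneOn_expSmooth (hf : Continuous f) (hf0 : ∀ x, 0 ≤ x → 0 ≤ f x)
    (hmono : MonotoneOn f (Ici 0)) : MonotoneOn (expSmooth f) (Ici 0) := by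
  intro t₁ ht₁ t₂ _ h
  rw [mem_Ici] at ht₁
  rw [expSmooth_eq_integral_comp_sub, expSmooth_eq_integral_comp_sub]
  have hcont : ∀ t, Continuous fun y => f (t - y) * exp (-y) := fun t => by fun_prop
  calc ∫ y in (0:ℝ)..t₁, f (t₁ - y) * exp (-y)
      ≤ ∫ y in (0:ℝ)..t₁, f (t₂ - y) * exp (-y) :=
        integral_mono_on ht₁ ((hcont _).intervalIntegrable _ _) ((hcont _).intervalIntegrable _ _)
          fun y hy => mul_le_mul_of_nonneg_right
            (hmono (mem_Ici.2 (by linarith [hy.2])) (mem_Ici.2 (by linarith [hy.2])) (by linarith))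
            (exp_pos _).le
    _ ≤ ∫ y in (0:ℝ)..t₂, f (t₂ - y) * exp (-y) :=
        integral_mono_interval le_rfl ht₁ h
          (ae_restrict_of_forall_mem measurableSet_Ioc fun y hy =>
            mul_nonneg (hf0 _ (by linarith [hy.2])) (exp_pos _).le)
          ((hcont _).intervalIntegrable _ _)

end expSmooth

section Nval

variable (a : ℕ → ℝ) (u : ℝ)

theorem Nstar_eq_expSmooth (r : ℕ) : Nstar a u r = expSmooth (Nval a u r) := rfl

theorem Nval_zero (t : ℝ) : Nval a u 0 t = 0 := rfl

theorem Nstar_zero (t : ℝ) : Nstar a u 0 t = 0 := by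
  simp [Nstar, Nval_zero]

theorem Nhist_eq_Nval {m n : ℕ} (h : m ≤ n) : Nhist a u n m = Nval a u m := by
  induction n, h using Nat.le_induction with
  | base => rfl
  | succ n hmn ih => funext t; rw [Nhist, if_pos hmn, ih]

theorem Nval_succ (n : ℕ) (t : ℝ) :
    Nval a u (n + 1) t = (Finset.Icc 1 (n + 1)).sup' (Finset.nonempty_Icc.mpr (by omega))
      (fun j => Nalloc a u (n + 1) j t) := by
  rw [Nval, Nhist, if_neg (by omega)]
  refine Finset.sup'_congr _ rfl fun j hj => ?_
  rw [Nhist_eq_Nval a u (by grind)]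
  rfl

theorem Nalloc_le_Nval {n j : ℕ} (hj : 1 ≤ j) (hjn : j ≤ n) (t : ℝ) :
    Nalloc a u n j t ≤ Nval a u n t := by
  obtain ⟨m, rfl⟩ := Nat.exists_eq_add_of_le' (hj.trans hjn)
  rw [Nval_succ]
  exact Finset.le_sup' (fun j => Nalloc a u (m + 1) j t) (Finset.mem_Icc.mpr ⟨hj, hjn⟩)

theorem exists_Nalloc_eq_Nval {n : ℕ} (hn : 1 ≤ n) (t : ℝ) :
    ∃ j, 1 ≤ j ∧ j ≤ n ∧ Nalloc a u n j t = Nval a u n t := by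
  obtain ⟨m, rfl⟩ := Nat.exists_eq_add_of_le' hn
  obtain ⟨j, hj, hjmax⟩ := Finset.exists_mem_eq_sup' (Finset.nonempty_Icc.mpr (by omega))
    (fun j => Nalloc a u (m + 1) j t)
  exact ⟨j, (Finset.mem_Icc.mp hj).1, (Finset.mem_Icc.mp hj).2, by rw [Nval_succ, hjmax]⟩

theorem Nval_one (t : ℝ) : Nval a u 1 t = a 1 := by
  simp [Nval_succ, Nalloc, Nstar_zero]

theorem continuous_Nval (n : ℕ) : Continuous (Nval a u n) := by
  induction n using Nat.strong_induction_on with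
  | _ n ih =>
  rcases n with _ | n
  · exact continuous_const
  · rw [funext (Nval_succ a u n)]
    refine Continuous.finset_sup'_apply _ fun j hj => ?_
    have hj1 := (Finset.mem_Icc.mp hj).1
    exact continuous_const.add
      (continuous_const.mul (continuous_expSmooth (ih (n + 1 - j) (by omega))))

end Nval

section Invincible

variable (a : ℕ → ℝ)

theorem Nalloc_u_one (n j : ℕ) (t : ℝ) : Nalloc a 1 n j t = a j + Nstar a 1 (n - j) t := by
  simp [Nalloc]

theorem Nval_le_Nval_succ (ha1 : 0 ≤ a 1) (n : ℕ) {t : ℝ} (ht : 0 ≤ t) :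
    Nval a 1 n t ≤ Nval a 1 (n + 1) t := by
  induction n using Nat.strong_induction_on generalizing t with
  | _ n ih =>
  rcases Nat.eq_zero_or_pos n with rfl | hn
  · rwa [Nval_zero, Nval_one]
  obtain ⟨j, hj1, hjn, hj⟩ := exists_Nalloc_eq_Nval a 1 hn t
  have hstar : Nstar a 1 (n - j) t ≤ Nstar a 1 (n + 1 - j) t := by
    rw [show n + 1 - j = n - j + 1 by omega]
    exact expSmooth_le_expSmooth (continuous_Nval a 1 _) (continuous_Nval a 1 _) ht
      fun x hx => ih (n - j) (by omega) hx.1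
  calc Nval a 1 n t = a j + Nstar a 1 (n - j) t := by rw [← hj, Nalloc_u_one]
    _ ≤ a j + Nstar a 1 (n + 1 - j) t := by linarith
    _ = Nalloc a 1 (n + 1) j t := (Nalloc_u_one a _ _ _).symm
    _ ≤ Nval a 1 (n + 1) t := Nalloc_le_Nval a 1 hj1 (by omega) t

theorem Nstar_sub_le_Nstar_sub (ha1 : 0 ≤ a 1) {n : ℕ}
    (hD : ∀ r < n, MonotoneOn (fun t => Nval a 1 (r + 1) t - Nval a 1 r t) (Ici 0))
    {t t' : ℝ} (ht : 0 ≤ t) (htt' : t ≤ t') {r' r : ℕ} (hr'r : r' ≤ r) (hrn : r ≤ n) :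
    Nstar a 1 r' t' - Nstar a 1 r' t ≤ Nstar a 1 r t' - Nstar a 1 r t := by
  induction r, hr'r using Nat.le_induction with
  | base => exact le_rfl
  | succ r _ ih =>
    have hcont := continuous_Nval a 1
    have hsmooth : MonotoneOn (fun t => Nstar a 1 (r + 1) t - Nstar a 1 r t) (Ici 0) := by
      simp only [Nstar_eq_expSmooth, expSmooth_sub (hcont _) (hcont _)]
      exact monotoneOn_expSmooth ((hcont _).sub (hcont _))
        (fun x hx => sub_nonneg.2 (Nval_le_Nval_succ a ha1 r hx)) (hD r (by omega))
    have := hsmooth ht (le_trans ht htt') htt'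
    linarith [ih (by omega)]

theorem Nval_succ_sub_le (hconc : Antitone fun j => a (j + 1) - a j) {n : ℕ} (hn : 1 ≤ n)
    {t t' : ℝ} (hΦ : ∀ r' r, r' ≤ r → r ≤ n →
      Nstar a 1 r' t' - Nstar a 1 r' t ≤ Nstar a 1 r t' - Nstar a 1 r t) :
    Nval a 1 (n + 1) t - Nval a 1 n t ≤ Nval a 1 (n + 1) t' - Nval a 1 n t' := by
  obtain ⟨K, hK1, hKn, hK⟩ := exists_Nalloc_eq_Nval a 1 (by omega : 1 ≤ n + 1) t
  obtain ⟨K', hK'1, hK'n, hK'⟩ := exists_Nalloc_eq_Nval a 1 hn t'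
  rw [← hK, ← hK']
  rcases le_or_gt K (K' + 1) with hKK' | hKK'
  · have h₁ := Nalloc_le_Nval a 1 hK1 hKn t'
    have h₂ := Nalloc_le_Nval a 1 hK'1 hK'n t
    have hΦ' := hΦ (n - K') (n + 1 - K) (by omega) (by omega)
    simp only [Nalloc_u_one] at h₁ h₂ ⊢
    linarith
  · have h₁ := Nalloc_le_Nval a 1 (n := n + 1) (j := K' + 1) (by omega) (by omega) t'
    have h₂ := Nalloc_le_Nval a 1 (n := n) (j := K - 1) (by omega) (by omega) t
    have hconc' := hconc (show K' ≤ K - 1 by omega)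
    simp only [Nalloc_u_one, show n + 1 - (K' + 1) = n - K' by omega,
      show n - (K - 1) = n + 1 - K by omega, show K - 1 + 1 = K by omega] at h₁ h₂ hconc' ⊢
    linarith

theorem monotoneOn_Nval_succ_sub (ha1 : 0 ≤ a 1) (hconc : Antitone fun j => a (j + 1) - a j)
    (n : ℕ) : MonotoneOn (fun t => Nval a 1 (n + 1) t - Nval a 1 n t) (Ici 0) := by
  induction n using Nat.strong_induction_on with
  | _ n ih =>
  rcases Nat.eq_zero_or_pos n with rfl | hn
  · simp only [zero_add, Nval_one, Nval_zero]
    exact monotoneOn_const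
  · exact fun t ht t' _ htt' => Nval_succ_sub_le a hconc hn
      fun r' r hr'r hrn => Nstar_sub_le_Nstar_sub a ha1 ih ht htt' hr'r hrn

end Invincible

theorem invincible_diff_monotone_general
    (a : ℕ → ℝ) (haI : ∀ j, a j ∈ Set.Icc (0:ℝ) 1)
    (hconc : ∀ j : ℕ, a (j + 2) - a (j + 1) < a (j + 1) - a j) :
    ∀ s : ℕ, 1 ≤ s →
      MonotoneOn (fun t => Nval a 1 s t - Nval a 1 (s - 1) t) (Set.Ici (0:ℝ)) := by
  intro s hs
  obtain ⟨n, rfl⟩ := Nat.exists_eq_add_of_le' hs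
  simpa using monotoneOn_Nval_succ_sub a (haI 1).1
    (antitone_nat_of_succ_le fun j => (hconc j).le) n

/-- For the Invincible Fighter (`u = 1`), for every `s ≥ 1` the function
`t ↦ N(s,t) - N(s-1,t)` is non-decreasing on `[0,∞)`. -/
theorem invincible_diff_monotone
    (a : ℕ → ℝ) (haI : ∀ j, a j ∈ Set.Icc (0:ℝ) 1) (ha0 : a 0 = 0)
    (hmono : StrictMono a)
    (hconc : ∀ j : ℕ, a (j + 2) - a (j + 1) < a (j + 1) - a j) :
    ∀ s : ℕ, 1 ≤ s →
      MonotoneOn (fun t => Nval a 1 s t - Nval a 1 (s - 1) t) (Set.Ici (0:ℝ)) :=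
  invincible_diff_monotone_general a haI hconc
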